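/- arXiv:2411.05265 — 2 statements merged into one kernel-verified Lean document; each statement's English description precedes it below -/
import Mathlib

section
/- Let v(x₁,x₂) = cos(ω x₁) θ(x₁,x₂) where θ ∈ C¹_c(ℝ²) and ω > 0. Then the G-norm of v satisfies ‖v‖_G ≤ C/|ω| for a constant C depending only on θ, where ‖v‖_G = inf{ ‖(g₁² + g₂²)^{1/2}‖_{L^∞} : g = (g₁,g₂) ∈ L^∞ × L^∞, v = div g }. -/
open Metric MeasureTheory intervalIntegral

lemma hasFDerivAt_of_partial_derivs (ψ f : ℝ × ℝ → ℝ) (d : ℝ) (x : ℝ × ℝ)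
    (hf : Continuous f)
    (h1 : ∀ p : ℝ × ℝ, HasDerivAt (fun t => ψ (t, p.2)) (f p) p.1)
    (h2 : HasDerivAt (fun s => ψ (x.1, s)) d x.2) :
    HasFDerivAt ψ (f x • ContinuousLinearMap.fst ℝ ℝ ℝ + d • ContinuousLinearMap.snd ℝ ℝ ℝ) x := by
  rw [hasFDerivAt_iff_isLittleO_nhds_zero, Asymptotics.isLittleO_iff]
  intro c hc
  have hc2 : 0 < c / 2 := by linarith
  -- from h2
  rw [hasDerivAt_iff_isLittleO, Asymptotics.isLittleO_iff] at h2
  obtain ⟨δ₂, hδ₂pos, hδ₂⟩ := Metric.eventually_nhds_iff.mp (h2 hc2)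
  -- from continuity of f at x
  obtain ⟨δ₁, hδ₁pos, hδ₁⟩ := Metric.continuousAt_iff.mp hf.continuousAt (c / 2) hc2
  have hδpos : 0 < min δ₁ δ₂ := lt_min hδ₁pos hδ₂pos
  filter_upwards [Metric.ball_mem_nhds (0 : ℝ × ℝ) hδpos] with h hh
  rw [mem_ball_zero_iff] at hh
  have hh1 : |h.1| < min δ₁ δ₂ := lt_of_le_of_lt (norm_fst_le h) hh
  have hh2 : |h.2| < min δ₁ δ₂ := lt_of_le_of_lt (norm_snd_le h) hh
  -- B bound
  have hB : |ψ (x.1, x.2 + h.2) - ψ (x.1, x.2) - h.2 * d| ≤ c / 2 * |h.2| := by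
    have := hδ₂ (y := x.2 + h.2) (by rw [Real.dist_eq]; simpa using lt_of_lt_of_le hh2 (min_le_right _ _))
    simpa [Real.norm_eq_abs, smul_eq_mul] using this
  -- A bound via MVT
  set s : Set ℝ := Metric.ball x.1 (min δ₁ δ₂) with hs
  have hA : |(ψ (x.1 + h.1, x.2 + h.2) - (x.1 + h.1) * f x) - (ψ (x.1, x.2 + h.2) - x.1 * f x)|
      ≤ c / 2 * |x.1 + h.1 - x.1| := by
    have := Convex.norm_image_sub_le_of_norm_hasDerivWithin_le
      (f := fun t => ψ (t, x.2 + h.2) - t * f x)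
      (f' := fun t => f (t, x.2 + h.2) - f x) (s := s) (C := c / 2)
      (fun t ht => (((h1 (t, x.2 + h.2)).sub (hasDerivAt_mul_const (f x))).hasDerivWithinAt))
      (fun t ht => by
        have hd : dist (t, x.2 + h.2) x < δ₁ := by
          rw [Prod.dist_eq]
          have h1' : dist t x.1 < δ₁ := lt_of_lt_of_le (mem_ball.mp ht) (min_le_left _ _)
          have h2' : dist (x.2 + h.2) x.2 < δ₁ := by
            rw [Real.dist_eq]
            simpa using lt_of_lt_of_le hh2 (min_le_left _ _)
          exact max_lt h1' h2'
        have := hδ₁ hd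
        rw [Real.dist_eq] at this
        exact le_of_lt this)
      (convex_ball _ _)
      (mem_ball_self hδpos)
      (by rw [mem_ball, Real.dist_eq, add_sub_cancel_left]; exact hh1)
    simpa [Real.norm_eq_abs] using this
  -- combine
  have hEval : (f x • ContinuousLinearMap.fst ℝ ℝ ℝ + d • ContinuousLinearMap.snd ℝ ℝ ℝ) h
      = f x * h.1 + d * h.2 := by simp
  have hxh : x + h = (x.1 + h.1, x.2 + h.2) := rfl
  have hxe : ψ x = ψ (x.1, x.2) := by rw [Prod.mk.eta]
  rw [hEval, hxh, hxe]
  have key : ψ (x.1 + h.1, x.2 + h.2) - ψ (x.1, x.2) - (f x * h.1 + d * h.2)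
      = ((ψ (x.1 + h.1, x.2 + h.2) - (x.1 + h.1) * f x) - (ψ (x.1, x.2 + h.2) - x.1 * f x))
        + (ψ (x.1, x.2 + h.2) - ψ (x.1, x.2) - h.2 * d) := by ring
  rw [Real.norm_eq_abs, key]
  calc |_ + _| ≤ c / 2 * |x.1 + h.1 - x.1| + c / 2 * |h.2| := (abs_add_le _ _).trans (add_le_add hA hB)
    _ ≤ c / 2 * ‖h‖ + c / 2 * ‖h‖ := by
        gcongr
        · simpa using (norm_fst_le h)
        · exact norm_snd_le h
    _ = c * ‖h‖ := by ring



/-- The set of admissible bounds for Meyer's `G`-norm of `f`: radii `r ≥ 0` such that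
`f = div g` for some field `g` with `|g(x)| ≤ r` everywhere. -/
def Gset (f : ℝ × ℝ → ℝ) : Set ℝ :=
  { r : ℝ | 0 ≤ r ∧ ∃ g : ℝ × ℝ → ℝ × ℝ, Differentiable ℝ g ∧
      (∀ x, Real.sqrt ((g x).1 ^ 2 + (g x).2 ^ 2) ≤ r) ∧
      (∀ x, (fderiv ℝ (fun y => (g y).1) x) (1, 0)
              + (fderiv ℝ (fun y => (g y).2) x) (0, 1) = f x) }

/-- For `θ ∈ C¹_c(ℝ²)` and `v_ω(x) = cos(ω x₁) θ(x)`, Meyer's `G`-norm satisfies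
`‖v_ω‖_G ≤ C/|ω|` for a constant `C` depending only on `θ`. -/
theorem oscillating_texture_G_norm (θ : ℝ × ℝ → ℝ)
    (hθ : ContDiff ℝ 1 θ) (hsupp : HasCompactSupport θ) :
    ∃ C : ℝ, ∀ ω : ℝ, 0 < ω →
      sInf (Gset (fun x => Real.cos (ω * x.1) * θ x)) ≤ C / |ω| := by
  have hθc : Continuous θ := hθ.continuous
  obtain ⟨Mθ, hMθ⟩ := hθc.bounded_above_of_compact_support hsupp
  have hfd_cont : Continuous (fderiv ℝ θ) := hθ.continuous_fderiv one_ne_zero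
  obtain ⟨M₂, hM₂⟩ := hfd_cont.bounded_above_of_compact_support (hsupp.fderiv (𝕜 := ℝ))
  obtain ⟨R, hR⟩ := hsupp.isCompact.isBounded.subset_closedBall 0
  set R0 : ℝ := max R 0 with hR0def
  have hR0 : (0:ℝ) ≤ R0 := le_max_right _ _
  have hRsub : tsupport θ ⊆ Metric.closedBall 0 R0 :=
    hR.trans (Metric.closedBall_subset_closedBall (le_max_left _ _))
  have hMθ0 : 0 ≤ Mθ := le_trans (norm_nonneg _) (hMθ 0)
  have hM₂0 : 0 ≤ M₂ := le_trans (norm_nonneg _) (hM₂ 0)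
  refine ⟨Mθ + 2 * R0 * M₂, fun ω hω => ?_⟩
  have hω' : ω ≠ 0 := ne_of_gt hω
  set ψ : ℝ × ℝ → ℝ := fun x => ∫ t in (0:ℝ)..x.1, θ (t, x.2) * Real.cos (ω * t) with hψdef
  set f : ℝ × ℝ → ℝ := fun p => θ p * Real.cos (ω * p.1) with hfdef
  have hfcont : Continuous f := by fun_prop
  -- partial derivative in first variable
  have h1 : ∀ p : ℝ × ℝ, HasDerivAt (fun t => ψ (t, p.2)) (f p) p.1 := by
    intro p
    have hcont : Continuous fun t => θ (t, p.2) * Real.cos (ω * t) := by fun_prop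
    have := intervalIntegral.integral_hasDerivAt_right
      (hcont.intervalIntegrable 0 p.1) (hcont.stronglyMeasurableAtFilter _ _)
      hcont.continuousAt
    simpa [hψdef, hfdef] using this
  -- partial derivative in second variable
  set D : ℝ × ℝ → ℝ := fun x => ∫ t in (0:ℝ)..x.1, (fderiv ℝ θ (t, x.2)) (0, 1) * Real.cos (ω * t)
    with hDdef
  have h01 : ‖((0:ℝ), (1:ℝ))‖ = 1 := by simp [Prod.norm_def]
  have h10 : ‖((1:ℝ), (0:ℝ))‖ = 1 := by simp [Prod.norm_def]
  have h2 : ∀ x : ℝ × ℝ, HasDerivAt (fun s => ψ (x.1, s)) (D x) x.2 := by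
    intro x
    have key := (intervalIntegral.hasDerivAt_integral_of_dominated_loc_of_deriv_le
      (𝕜 := ℝ) (μ := volume) (a := 0) (b := x.1) (x₀ := x.2)
      (F := fun s t => θ (t, s) * Real.cos (ω * t))
      (F' := fun s t => (fderiv ℝ θ (t, s)) (0, 1) * Real.cos (ω * t))
      (bound := fun _ => M₂) (Metric.ball_mem_nhds x.2 one_pos)
      (Filter.Eventually.of_forall fun s => by
        have : Continuous fun t => θ (t, s) * Real.cos (ω * t) := by fun_prop
        exact this.aestronglyMeasurable)
      ((by fun_prop : Continuous fun t => θ (t, x.2) * Real.cos (ω * t)).intervalIntegrable 0 x.1)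
      (by
        have : Continuous fun t => (fderiv ℝ θ (t, x.2)) (0, 1) * Real.cos (ω * t) := by
          exact ((hfd_cont.comp (continuous_id.prodMk continuous_const)).clm_apply
            continuous_const).mul (by fun_prop)
        exact this.aestronglyMeasurable)
      (Filter.Eventually.of_forall fun t _ s _ => by
        calc ‖(fderiv ℝ θ (t, s)) (0, 1) * Real.cos (ω * t)‖
            = ‖(fderiv ℝ θ (t, s)) (0, 1)‖ * ‖Real.cos (ω * t)‖ := norm_mul _ _
          _ ≤ (‖fderiv ℝ θ (t, s)‖ * ‖((0:ℝ), (1:ℝ))‖) * 1 := by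
              apply mul_le_mul ((fderiv ℝ θ (t, s)).le_opNorm _) _ (norm_nonneg _)
                (by positivity)
              rw [Real.norm_eq_abs]; exact Real.abs_cos_le_one _
          _ ≤ M₂ := by rw [h01, mul_one, mul_one]; exact hM₂ _)
      (intervalIntegrable_const)
      (Filter.Eventually.of_forall fun t _ s _ => by
        have hline : HasDerivAt (fun s : ℝ => ((t, s) : ℝ × ℝ)) (0, 1) s :=
          (hasDerivAt_const s t).prodMk (hasDerivAt_id s)
        have hθd : HasFDerivAt θ (fderiv ℝ θ (t, s)) (t, s) :=
          (hθ.differentiable one_ne_zero (t, s)).hasFDerivAt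
        exact (hθd.comp_hasDerivAt s hline).mul_const (Real.cos (ω * t)))).2
    exact key
  have hΨ : ∀ x : ℝ × ℝ, HasFDerivAt ψ
      (f x • ContinuousLinearMap.fst ℝ ℝ ℝ + (D x) • ContinuousLinearMap.snd ℝ ℝ ℝ) x :=
    fun x => hasFDerivAt_of_partial_derivs ψ f (D x) x hfcont h1 (h2 x)
  -- the bound |ψ x| ≤ C / ω
  have hbound : ∀ x : ℝ × ℝ, |ψ x| ≤ (Mθ + 2 * R0 * M₂) / ω := by
    intro x
    have hline1 : ∀ t : ℝ, HasDerivAt (fun t : ℝ => ((t, x.2) : ℝ × ℝ)) (1, 0) t :=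
      fun t => (hasDerivAt_id t).prodMk (hasDerivAt_const t x.2)
    have hu : ∀ t ∈ Set.uIcc (0:ℝ) x.1,
        HasDerivAt (fun t => θ (t, x.2)) ((fderiv ℝ θ (t, x.2)) (1, 0)) t := fun t _ =>
      ((hθ.differentiable one_ne_zero (t, x.2)).hasFDerivAt).comp_hasDerivAt t (hline1 t)
    have hv : ∀ t ∈ Set.uIcc (0:ℝ) x.1,
        HasDerivAt (fun t => Real.sin (ω * t) / ω) (Real.cos (ω * t)) t := by
      intro t _
      have hωt : HasDerivAt (fun t : ℝ => ω * t) ω t := by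
        simpa using (hasDerivAt_id t).const_mul ω
      have := ((Real.hasDerivAt_sin (ω * t)).comp t hωt).div_const ω
      simpa [mul_comm, mul_div_assoc, mul_div_cancel_right₀, hω'] using this
    have hu' : IntervalIntegrable (fun t => (fderiv ℝ θ (t, x.2)) (1, 0)) volume 0 x.1 :=
      (((hfd_cont.comp (continuous_id.prodMk continuous_const)).clm_apply
        continuous_const)).intervalIntegrable _ _
    have hv' : IntervalIntegrable (fun t => Real.cos (ω * t)) volume 0 x.1 :=
      (by fun_prop : Continuous fun t => Real.cos (ω * t)).intervalIntegrable _ _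
    have hIBP := intervalIntegral.integral_mul_deriv_eq_deriv_mul hu hv hu' hv'
    have hψx : ψ x = θ (x.1, x.2) * (Real.sin (ω * x.1) / ω)
        - ∫ t in (0:ℝ)..x.1, (fderiv ℝ θ (t, x.2)) (1, 0) * (Real.sin (ω * t) / ω) := by
      rw [hψdef]
      simpa using hIBP
    -- bound each piece
    have hsinb : ∀ t : ℝ, |Real.sin (ω * t) / ω| ≤ 1 / ω := by
      intro t
      rw [abs_div, abs_of_pos hω]
      gcongr
      exact Real.abs_sin_le_one _
    set k : ℝ → ℝ := fun t => (fderiv ℝ θ (t, x.2)) (1, 0) with hkdef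
    have hkcont : Continuous k :=
      (hfd_cont.comp (continuous_id.prodMk continuous_const)).clm_apply continuous_const
    have hkzero : ∀ t : ℝ, t ∉ Set.Icc (-R0) R0 → k t = 0 := by
      intro t ht
      have htR : R0 < |t| := by
        by_contra hcon
        push_neg at hcon
        exact ht (Set.mem_Icc.mpr (abs_le.mp hcon))
      have hnot : ((t, x.2) : ℝ × ℝ) ∉ tsupport θ := by
        intro hmem
        have h' := hRsub hmem
        rw [Metric.mem_closedBall, dist_zero_right] at h'
        have : |t| ≤ R0 := le_trans (by simpa using norm_fst_le ((t, x.2) : ℝ × ℝ)) h'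
        linarith
      have hfz : fderiv ℝ θ (t, x.2) = 0 := by
        by_contra hne
        exact hnot (support_fderiv_subset ℝ (Function.mem_support.mpr hne))
      rw [hkdef]; simp [hfz]
    have hkbound : ∀ t : ℝ, ‖k t‖ ≤ M₂ := by
      intro t
      calc ‖k t‖ ≤ ‖fderiv ℝ θ (t, x.2)‖ * ‖((1:ℝ), (0:ℝ))‖ :=
            (fderiv ℝ θ (t, x.2)).le_opNorm _
        _ ≤ M₂ := by rw [h10, mul_one]; exact hM₂ _
    have hInt : |∫ t in (0:ℝ)..x.1, k t * (Real.sin (ω * t) / ω)| ≤ 2 * R0 * M₂ / ω := by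
      set g : ℝ → ℝ := fun t => ‖k t * (Real.sin (ω * t) / ω)‖ with hgdef
      have hgcont : Continuous g := (hkcont.mul (by fun_prop)).norm
      have hgsupp : HasCompactSupport g := HasCompactSupport.intro (isCompact_Icc (a := -R0) (b := R0))
        (fun t ht => by simp [hgdef, hkzero t ht])
      have hgint : Integrable g := hgcont.integrable_of_hasCompactSupport hgsupp
      have step1 : |∫ t in (0:ℝ)..x.1, k t * (Real.sin (ω * t) / ω)|
          ≤ ∫ t in Set.uIoc (0:ℝ) x.1, g t := by
        have h := intervalIntegral.norm_integral_le_integral_norm_uIoc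
          (f := fun t => k t * (Real.sin (ω * t) / ω)) (a := 0) (b := x.1) (μ := volume)
        rw [Real.norm_eq_abs] at h
        exact h
      have step2 : ∫ t in Set.uIoc (0:ℝ) x.1, g t ≤ ∫ t, g t :=
        setIntegral_le_integral hgint (Filter.Eventually.of_forall fun t => norm_nonneg _)
      have hind : Integrable (Set.indicator (Set.Icc (-R0) R0) (fun _ => M₂ * (1/ω))) := by
        rw [integrable_indicator_iff measurableSet_Icc]
        exact integrableOn_const measure_Icc_lt_top.ne
      have step3 : ∫ t, g t ≤ ∫ t, Set.indicator (Set.Icc (-R0) R0) (fun _ => M₂ * (1/ω)) t := by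
        apply integral_mono hgint hind
        intro t
        by_cases ht : t ∈ Set.Icc (-R0) R0
        · rw [Set.indicator_of_mem ht]
          calc g t = ‖k t‖ * |Real.sin (ω * t) / ω| := by
                show ‖k t * (Real.sin (ω * t) / ω)‖ = _
                rw [norm_mul, Real.norm_eq_abs (Real.sin (ω * t) / ω)]
            _ ≤ M₂ * (1/ω) :=
                mul_le_mul (hkbound t) (hsinb t) (abs_nonneg _) hM₂0
        · rw [Set.indicator_of_notMem ht]
          rw [hgdef]; simp [hkzero t ht]
      have step4 : ∫ t, Set.indicator (Set.Icc (-R0) R0) (fun _ => M₂ * (1/ω)) t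
          = 2 * R0 * M₂ / ω := by
        rw [integral_indicator_const _ measurableSet_Icc, Real.volume_real_Icc_of_le (by linarith), smul_eq_mul]
        ring
      linarith [step1.trans (step2.trans step3), step4.le, step4.ge]
    rw [hψx]
    have habs : |θ (x.1, x.2) * (Real.sin (ω * x.1) / ω)
        - ∫ t in (0:ℝ)..x.1, k t * (Real.sin (ω * t) / ω)|
        ≤ |θ (x.1, x.2) * (Real.sin (ω * x.1) / ω)|
          + |∫ t in (0:ℝ)..x.1, k t * (Real.sin (ω * t) / ω)| := by
      rw [sub_eq_add_neg]
      exact (abs_add_le _ _).trans (by rw [abs_neg])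
    have hterm1 : |θ (x.1, x.2) * (Real.sin (ω * x.1) / ω)| ≤ Mθ * (1/ω) := by
      rw [abs_mul]
      exact mul_le_mul (by simpa [Real.norm_eq_abs] using hMθ (x.1, x.2)) (hsinb x.1)
        (abs_nonneg _) hMθ0
    have : (Mθ + 2 * R0 * M₂) / ω = Mθ * (1/ω) + 2 * R0 * M₂ / ω := by ring
    rw [this]
    exact habs.trans (add_le_add hterm1 hInt)
  -- conclude
  rw [abs_of_pos hω]
  apply csInf_le ⟨0, fun r hr => hr.1⟩
  refine ⟨div_nonneg (by positivity) hω.le, fun x => (ψ x, 0), ?_, ?_, ?_⟩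
  · have hψd : Differentiable ℝ ψ := fun x => (hΨ x).differentiableAt
    exact hψd.prodMk (differentiable_const 0)
  · intro x
    show Real.sqrt ((ψ x) ^ 2 + 0 ^ 2) ≤ _
    have h' : (ψ x) ^ 2 + (0:ℝ) ^ 2 = (ψ x) ^ 2 := by ring
    rw [h', Real.sqrt_sq_eq_abs]
    exact hbound x
  · intro x
    have e1 : (fun y : ℝ × ℝ => ((fun x => ((ψ x, (0:ℝ)) : ℝ × ℝ)) y).1) = ψ := rfl
    have e2 : (fun y : ℝ × ℝ => ((fun x => ((ψ x, (0:ℝ)) : ℝ × ℝ)) y).2) = fun _ => (0:ℝ) := rfl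
    rw [e1, e2, (hΨ x).fderiv]
    simp [hfdef, mul_comm]
end

section
/- Let X = ℝ^{M×N}, g ∈ X, λ > 0, J the discrete total variation, and let P_{G_λ} denote the orthogonal projection onto the closed convex set G_λ = {λ div p : p ∈ Y, |p_{i,j}| ≤ 1 ∀ i,j}. Then the unique minimizer of u ↦ ‖u − g‖²/(2λ) + J(u) is u = g − P_{G_λ}(g). -/
open Finset

open Finset

/-- Forward-difference discrete gradient, first component. -/
def gradX (M : ℕ) (u : ℕ → ℕ → ℝ) (i j : ℕ) : ℝ :=
  if i + 1 < M then u (i + 1) j - u i j else 0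

/-- Forward-difference discrete gradient, second component. -/
def gradY (N : ℕ) (u : ℕ → ℕ → ℝ) (i j : ℕ) : ℝ :=
  if j + 1 < N then u i (j + 1) - u i j else 0

/-- Discrete divergence with the boundary conventions of Chambolle. -/
def divOp (M N : ℕ) (p1 p2 : ℕ → ℕ → ℝ) (i j : ℕ) : ℝ :=
  (if i = 0 then p1 0 j else if i = M - 1 then -p1 (i - 1) j else p1 i j - p1 (i - 1) j)
  + (if j = 0 then p2 i 0 else if j = N - 1 then -p2 i (j - 1) else p2 i j - p2 i (j - 1))

/-- Inner product on `X = ℝ^{M×N}`. -/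
def ipX (M N : ℕ) (u v : ℕ → ℕ → ℝ) : ℝ :=
  ∑ i ∈ Finset.range M, ∑ j ∈ Finset.range N, u i j * v i j

/-- Discrete total variation. -/
noncomputable def tvJ (M N : ℕ) (u : ℕ → ℕ → ℝ) : ℝ :=
  ∑ i ∈ Finset.range M, ∑ j ∈ Finset.range N,
    Real.sqrt ((gradX M u i j) ^ 2 + (gradY N u i j) ^ 2)

lemma abel1 (M : ℕ) (hM : 2 ≤ M) (a u : ℕ → ℝ) :
    ∑ i ∈ Finset.range M,
      ((if i = 0 then a 0 else if i = M - 1 then -a (i-1) else a i - a (i-1)) * u i)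
    = -∑ i ∈ Finset.range M, a i * (if i + 1 < M then u (i+1) - u i else 0) := by
  obtain ⟨m, rfl⟩ : ∃ m, M = m + 1 := ⟨M - 1, by omega⟩
  have hm : 1 ≤ m := by omega
  set b : ℕ → ℝ := fun i => if i + 1 < m + 1 then a i else 0 with hb
  have hd : ∀ i ∈ Finset.range (m+1),
      (if i = 0 then a 0 else if i = m + 1 - 1 then -a (i-1) else a i - a (i-1)) * u i
      = b i * u i - (if i = 0 then (0:ℝ) else b (i-1)) * u i := by
    intro i hi
    simp only [Finset.mem_range] at hi
    rcases eq_or_ne i 0 with rfl | h0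
    · have h0m : 0 < m := hm
      simp [hb, h0m]
    · rcases eq_or_ne i m with h1 | h1
      · subst h1
        have hA : i ≠ 0 := h0
        have hB : i - 1 < i := by omega
        simp [hb, hA, hB]
      · have hB : i < m := by omega
        have hC : i - 1 < m := by omega
        simp [hb, h0, h1, hB, hC]
        ring
  rw [Finset.sum_congr rfl hd, Finset.sum_sub_distrib]
  have e1 : ∑ i ∈ Finset.range (m+1), b i * u i = ∑ i ∈ Finset.range m, b i * u i := by
    rw [Finset.sum_range_succ]
    simp [hb]
  have e2 : ∑ i ∈ Finset.range (m+1), (if i = 0 then (0:ℝ) else b (i-1)) * u i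
      = ∑ i ∈ Finset.range m, b i * u (i+1) := by
    rw [Finset.sum_range_succ']
    simp
  rw [e1, e2, ← Finset.sum_sub_distrib]
  rw [Finset.sum_range_succ]
  have h5 : ¬ (m + 1 < m + 1) := by omega
  simp only [h5, if_false, mul_zero, add_zero]
  rw [← Finset.sum_neg_distrib]
  refine Finset.sum_congr rfl fun i hi => ?_
  simp only [Finset.mem_range] at hi
  simp [hb, hi]
  ring

lemma sbp (M N : ℕ) (hM : 2 ≤ M) (hN : 2 ≤ N) (p1 p2 u : ℕ → ℕ → ℝ) :
    ipX M N (divOp M N p1 p2) u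
    = -∑ i ∈ Finset.range M, ∑ j ∈ Finset.range N,
        (p1 i j * gradX M u i j + p2 i j * gradY N u i j) := by
  have h1 : ∀ j, ∑ i ∈ Finset.range M,
      ((if i = 0 then p1 0 j else if i = M - 1 then -p1 (i-1) j else p1 i j - p1 (i-1) j) * u i j)
      = -∑ i ∈ Finset.range M, p1 i j * gradX M u i j := by
    intro j
    simpa [gradX] using abel1 M hM (fun i => p1 i j) (fun i => u i j)
  have h2 : ∀ i, ∑ j ∈ Finset.range N,
      ((if j = 0 then p2 i 0 else if j = N - 1 then -p2 i (j-1) else p2 i j - p2 i (j-1)) * u i j)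
      = -∑ j ∈ Finset.range N, p2 i j * gradY N u i j := by
    intro i
    simpa [gradY] using abel1 N hN (fun j => p2 i j) (fun j => u i j)
  unfold ipX divOp
  simp only [add_mul, Finset.sum_add_distrib]
  have e1 : ∑ i ∈ Finset.range M, ∑ j ∈ Finset.range N,
      ((if i = 0 then p1 0 j else if i = M - 1 then -p1 (i-1) j else p1 i j - p1 (i-1) j) * u i j)
      = -∑ i ∈ Finset.range M, ∑ j ∈ Finset.range N, p1 i j * gradX M u i j := by
    rw [Finset.sum_comm, Finset.sum_congr rfl (fun j _ => h1 j), Finset.sum_neg_distrib]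
    rw [Finset.sum_comm]
  have e2 : ∑ i ∈ Finset.range M, ∑ j ∈ Finset.range N,
      ((if j = 0 then p2 i 0 else if j = N - 1 then -p2 i (j-1) else p2 i j - p2 i (j-1)) * u i j)
      = -∑ i ∈ Finset.range M, ∑ j ∈ Finset.range N, p2 i j * gradY N u i j := by
    rw [Finset.sum_congr rfl (fun i _ => h2 i), Finset.sum_neg_distrib]
  rw [e1, e2]
  ring

/-- pointwise Cauchy-Schwarz -/
lemma pair_le (p1 p2 a b : ℝ) (h : p1^2 + p2^2 ≤ 1) :
    p1*a + p2*b ≤ Real.sqrt (a^2+b^2) := by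
  have h2 : (p1*a + p2*b)^2 ≤ a^2 + b^2 := by
    nlinarith [sq_nonneg (p1*b - p2*a), sq_nonneg a, sq_nonneg b, sq_nonneg (p1*a+p2*b)]
  calc p1*a+p2*b ≤ |p1*a+p2*b| := le_abs_self _
    _ = Real.sqrt ((p1*a+p2*b)^2) := (Real.sqrt_sq_eq_abs _).symm
    _ ≤ Real.sqrt (a^2+b^2) := Real.sqrt_le_sqrt h2

lemma pg_le_tv (M N : ℕ) (p1 p2 x : ℕ → ℕ → ℝ)
    (hp : ∀ i j, (p1 i j)^2 + (p2 i j)^2 ≤ 1) :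
    ∑ i ∈ Finset.range M, ∑ j ∈ Finset.range N,
      (p1 i j * gradX M x i j + p2 i j * gradY N x i j) ≤ tvJ M N x := by
  refine Finset.sum_le_sum fun i _ => Finset.sum_le_sum fun j _ => ?_
  exact pair_le _ _ _ _ (hp i j)

lemma div_le_tv (M N : ℕ) (hM : 2 ≤ M) (hN : 2 ≤ N) (p1 p2 : ℕ → ℕ → ℝ)
    (hp : ∀ i j, (p1 i j)^2 + (p2 i j)^2 ≤ 1) (x : ℕ → ℕ → ℝ) :
    ipX M N (divOp M N p1 p2) x ≤ tvJ M N x := by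
  rw [sbp M N hM hN]
  have h := pg_le_tv M N (fun i j => -p1 i j) (fun i j => -p2 i j) x
    (by intro i j; show (-p1 i j)^2 + (-p2 i j)^2 ≤ 1; have := hp i j; nlinarith)
  have e : ∑ i ∈ Finset.range M, ∑ j ∈ Finset.range N,
      ((-p1 i j) * gradX M x i j + (-p2 i j) * gradY N x i j)
      = -∑ i ∈ Finset.range M, ∑ j ∈ Finset.range N,
        (p1 i j * gradX M x i j + p2 i j * gradY N x i j) := by
    rw [← Finset.sum_neg_distrib]
    refine Finset.sum_congr rfl fun i _ => ?_
    rw [← Finset.sum_neg_distrib]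
    exact Finset.sum_congr rfl fun j _ => by ring
  linarith [h, e.symm.le]

lemma attain (M N : ℕ) (hM : 2 ≤ M) (hN : 2 ≤ N) (u : ℕ → ℕ → ℝ) :
    ∃ p1 p2 : ℕ → ℕ → ℝ, (∀ i j, (p1 i j)^2 + (p2 i j)^2 ≤ 1) ∧
      ipX M N (divOp M N p1 p2) u = tvJ M N u := by
  set r : ℕ → ℕ → ℝ := fun i j => Real.sqrt ((gradX M u i j)^2 + (gradY N u i j)^2) with hr
  refine ⟨fun i j => if r i j = 0 then 0 else -(gradX M u i j) / r i j,
          fun i j => if r i j = 0 then 0 else -(gradY N u i j) / r i j, ?_, ?_⟩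
  · intro i j
    show (if r i j = 0 then (0:ℝ) else -(gradX M u i j)/r i j)^2
        + (if r i j = 0 then (0:ℝ) else -(gradY N u i j)/r i j)^2 ≤ 1
    by_cases h : r i j = 0
    · simp [h]
    · have hs : r i j ^ 2 = (gradX M u i j)^2 + (gradY N u i j)^2 :=
        Real.sq_sqrt (by positivity)
      rw [if_neg h, if_neg h]
      have heq : (-(gradX M u i j)/r i j)^2 + (-(gradY N u i j)/r i j)^2 = 1 := by
        field_simp
        linarith [hs]
      linarith [heq]
  · rw [sbp M N hM hN]
    unfold tvJ
    rw [← Finset.sum_neg_distrib]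
    refine Finset.sum_congr rfl fun i _ => ?_
    rw [← Finset.sum_neg_distrib]
    refine Finset.sum_congr rfl fun j _ => ?_
    show -((if r i j = 0 then (0:ℝ) else -(gradX M u i j)/r i j) * gradX M u i j
        + (if r i j = 0 then (0:ℝ) else -(gradY N u i j)/r i j) * gradY N u i j)
        = Real.sqrt ((gradX M u i j)^2 + (gradY N u i j)^2)
    by_cases h : r i j = 0
    · have h' : Real.sqrt ((gradX M u i j)^2 + (gradY N u i j)^2) = 0 := by
        simpa [hr] using h
      simp [h, h']
    · rw [if_neg h, if_neg h]
      have hs : r i j ^ 2 = (gradX M u i j)^2 + (gradY N u i j)^2 :=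
        Real.sq_sqrt (by positivity)
      have hrr : r i j = Real.sqrt ((gradX M u i j)^2 + (gradY N u i j)^2) := by
        simp [hr]
      rw [← hrr]
      have e2 : -(-gradX M u i j / r i j * gradX M u i j
          + -gradY N u i j / r i j * gradY N u i j)
          = ((gradX M u i j)^2 + (gradY N u i j)^2) / r i j := by ring
      rw [e2, ← hs, sq, mul_div_assoc, div_self h, mul_one]

lemma ipX_nonneg (M N : ℕ) (v : ℕ → ℕ → ℝ) : 0 ≤ ipX M N v v :=
  Finset.sum_nonneg fun i _ => Finset.sum_nonneg fun j _ => mul_self_nonneg _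

lemma ipX_expand (M N : ℕ) (v w : ℕ → ℕ → ℝ) (s : ℝ) :
    ipX M N (fun i j => v i j + s * w i j) (fun i j => v i j + s * w i j)
    = ipX M N v v + 2*s*ipX M N v w + s^2 * ipX M N w w := by
  unfold ipX
  rw [Finset.mul_sum, Finset.mul_sum, ← Finset.sum_add_distrib, ← Finset.sum_add_distrib]
  refine Finset.sum_congr rfl fun i _ => ?_
  rw [Finset.mul_sum, Finset.mul_sum, ← Finset.sum_add_distrib, ← Finset.sum_add_distrib]
  exact Finset.sum_congr rfl fun j _ => by ring

lemma ipX_pt (M N : ℕ) (f g f' g' : ℕ → ℕ → ℝ)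
    (h : ∀ i j, f i j * g i j = f' i j * g' i j) : ipX M N f g = ipX M N f' g' :=
  Finset.sum_congr rfl fun i _ => Finset.sum_congr rfl fun j _ => h i j

lemma ipX_sub_right (M N : ℕ) (u f g : ℕ → ℕ → ℝ) :
    ipX M N u (fun i j => f i j - g i j) = ipX M N u f - ipX M N u g := by
  unfold ipX
  rw [← Finset.sum_sub_distrib]
  refine Finset.sum_congr rfl fun i _ => ?_
  rw [← Finset.sum_sub_distrib]
  exact Finset.sum_congr rfl fun j _ => by ring

lemma vi_aux (lam c e : ℝ) (hlam : 0 < lam) (he : 0 ≤ e)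
    (h : ∀ t : ℝ, 0 < t → t ≤ 1 → 0 ≤ -(2*t*lam*c) + t^2*lam^2*e) : c ≤ 0 := by
  by_contra hc
  push_neg at hc
  rcases eq_or_lt_of_le he with he0 | he0
  · have h1 := h 1 one_pos le_rfl
    rw [← he0] at h1
    nlinarith
  · have hpos : 0 < lam^2*e := by positivity
    set t := min 1 (lam*c/(lam^2*e)) with ht
    have ht0 : 0 < t := lt_min one_pos (by positivity)
    have ht1 : t ≤ 1 := min_le_left _ _
    have h1 := h t ht0 ht1
    have htle : t ≤ lam*c/(lam^2*e) := min_le_right _ _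
    have h2 : t * (lam^2*e) ≤ lam*c := (le_div_iff₀ hpos).mp htle
    nlinarith [mul_le_mul_of_nonneg_left h2 ht0.le, mul_pos (mul_pos ht0 hlam) hc]

lemma feas_combo (t a1 a2 b1 b2 : ℝ) (ht0 : 0 ≤ t) (ht1 : t ≤ 1)
    (ha : a1^2+a2^2 ≤ 1) (hb : b1^2+b2^2 ≤ 1) :
    ((1-t)*a1 + t*b1)^2 + ((1-t)*a2 + t*b2)^2 ≤ 1 := by
  have h2 : a1*b1 + a2*b2 ≤ 1 := by nlinarith [sq_nonneg (a1-b1), sq_nonneg (a2-b2)]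
  nlinarith [mul_nonneg (sq_nonneg (1-t)) (sub_nonneg.mpr ha),
    mul_nonneg (sq_nonneg t) (sub_nonneg.mpr hb),
    mul_nonneg (mul_nonneg ht0 (sub_nonneg.mpr ht1)) (sub_nonneg.mpr h2)]

lemma div_combo (M N : ℕ) (t : ℝ) (q1 q2 p1 p2 : ℕ → ℕ → ℝ) (i j : ℕ) :
    divOp M N (fun i j => (1-t)*q1 i j + t*p1 i j) (fun i j => (1-t)*q2 i j + t*p2 i j) i j
    = (1-t) * divOp M N q1 q2 i j + t * divOp M N p1 p2 i j := by
  unfold divOp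
  split_ifs <;> ring

/-- If `q` realizes the orthogonal projection `P_{G_λ}(g)` of `g` onto
`G_λ = {λ div p : |p_{i,j}| ≤ 1}`, then `u = g - P_{G_λ}(g)` is the minimizer of
`u ↦ ‖u - g‖²/(2λ) + J(u)`. -/
theorem rof_minimizer_eq_sub_projection (M N : ℕ) (hM : 2 ≤ M) (hN : 2 ≤ N)
    (g : ℕ → ℕ → ℝ) (lam : ℝ) (hlam : 0 < lam)
    (q1 q2 : ℕ → ℕ → ℝ) (hq : ∀ i j, (q1 i j) ^ 2 + (q2 i j) ^ 2 ≤ 1)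
    (hproj : ∀ p1 p2 : ℕ → ℕ → ℝ, (∀ i j, (p1 i j) ^ 2 + (p2 i j) ^ 2 ≤ 1) →
      ipX M N (fun i j => lam * divOp M N q1 q2 i j - g i j)
              (fun i j => lam * divOp M N q1 q2 i j - g i j)
        ≤ ipX M N (fun i j => lam * divOp M N p1 p2 i j - g i j)
                (fun i j => lam * divOp M N p1 p2 i j - g i j)) :
    ∀ x : ℕ → ℕ → ℝ,
      ipX M N (fun i j => (g i j - lam * divOp M N q1 q2 i j) - g i j)
              (fun i j => (g i j - lam * divOp M N q1 q2 i j) - g i j) / (2 * lam)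
          + tvJ M N (fun i j => g i j - lam * divOp M N q1 q2 i j)
        ≤ ipX M N (fun i j => x i j - g i j) (fun i j => x i j - g i j) / (2 * lam)
          + tvJ M N x := by
  intro x
  set Dq : ℕ → ℕ → ℝ := divOp M N q1 q2 with hDq
  set u : ℕ → ℕ → ℝ := fun i j => g i j - lam * Dq i j with hu
  -- variational inequality
  have hVI : ∀ p1 p2 : ℕ → ℕ → ℝ, (∀ i j, (p1 i j)^2 + (p2 i j)^2 ≤ 1) →
      ipX M N u (divOp M N p1 p2) ≤ ipX M N u Dq := by
    intro p1 p2 hp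
    set E : ℕ → ℕ → ℝ := fun i j => divOp M N p1 p2 i j - Dq i j with hE
    have key : ipX M N u E ≤ 0 := by
      refine vi_aux lam _ (ipX M N E E) hlam (ipX_nonneg M N E) ?_
      intro t ht0 ht1
      have hfe : ∀ i j, ((fun i j => (1-t)*q1 i j + t*p1 i j) i j)^2
          + ((fun i j => (1-t)*q2 i j + t*p2 i j) i j)^2 ≤ 1 :=
        fun i j => feas_combo t _ _ _ _ ht0.le ht1 (hq i j) (hp i j)
      have hh := hproj _ _ hfe
      have hfun : (fun i j => lam * divOp M N (fun i j => (1-t)*q1 i j + t*p1 i j)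
            (fun i j => (1-t)*q2 i j + t*p2 i j) i j - g i j)
          = (fun i j => (lam * Dq i j - g i j) + (t*lam) * E i j) := by
        funext i j
        rw [div_combo]
        simp only [hE, hDq]
        ring
      rw [hfun] at hh
      have hex : ipX M N (fun i j => (lam * Dq i j - g i j) + (t*lam) * E i j)
            (fun i j => (lam * Dq i j - g i j) + (t*lam) * E i j)
          = ipX M N (fun i j => lam * Dq i j - g i j) (fun i j => lam * Dq i j - g i j)
            + 2*(t*lam)*ipX M N (fun i j => lam * Dq i j - g i j) E
            + (t*lam)^2 * ipX M N E E := ipX_expand M N _ _ _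
      rw [hex] at hh
      have hneg : ipX M N (fun i j => - u i j) E = - ipX M N u E := by
        unfold ipX
        rw [← Finset.sum_neg_distrib]
        refine Finset.sum_congr rfl fun i _ => ?_
        rw [← Finset.sum_neg_distrib]
        exact Finset.sum_congr rfl fun j _ => by ring
      have hAE : ipX M N (fun i j => lam * Dq i j - g i j) E = - ipX M N u E := by
        rw [← hneg]
        exact ipX_pt M N _ _ _ _ (fun i j => by simp only [hu]; ring)
      rw [hAE] at hh
      nlinarith [hh]
    rw [hE, ipX_sub_right] at key
    linarith
  -- J(u) = ⟨u, div q⟩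
  have hcomm : ∀ f h : ℕ → ℕ → ℝ, ipX M N f h = ipX M N h f :=
    fun f h => ipX_pt M N _ _ _ _ (fun i j => mul_comm _ _)
  have hJu : tvJ M N u = ipX M N u Dq := by
    obtain ⟨s1, s2, hsf, hs⟩ := attain M N hM hN u
    have h1 : ipX M N Dq u ≤ tvJ M N u := div_le_tv M N hM hN q1 q2 hq u
    have h3 := hVI s1 s2 hsf
    have h2 : tvJ M N u = ipX M N u (divOp M N s1 s2) := by
      rw [← hs]; exact (hcomm _ _).symm
    have h4 := hcomm Dq u
    linarith [h2.le, h2.ge]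
  have hJx : ipX M N x Dq ≤ tvJ M N x := by
    have h1 := div_le_tv M N hM hN q1 q2 hq x
    have h2 := hcomm Dq x
    linarith
  -- final algebra
  set A := ipX M N (fun i j => x i j - g i j) (fun i j => x i j - g i j) with hA
  set B := ipX M N Dq Dq with hB
  set C := ipX M N (fun i j => x i j - g i j) Dq with hC
  have f1 : ipX M N (fun i j => (g i j - lam * Dq i j) - g i j)
      (fun i j => (g i j - lam * Dq i j) - g i j) = lam^2 * B := by
    rw [hB]
    unfold ipX
    rw [Finset.mul_sum]
    refine Finset.sum_congr rfl fun i _ => ?_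
    rw [Finset.mul_sum]
    exact Finset.sum_congr rfl fun j _ => by ring
  have f2 : ipX M N u Dq = ipX M N g Dq - lam * B := by
    rw [hB]
    unfold ipX
    rw [Finset.mul_sum, ← Finset.sum_sub_distrib]
    refine Finset.sum_congr rfl fun i _ => ?_
    rw [Finset.mul_sum, ← Finset.sum_sub_distrib]
    refine Finset.sum_congr rfl fun j _ => ?_
    simp only [hu]
    ring
  have f3 : ipX M N x Dq = C + ipX M N g Dq := by
    rw [hC]
    unfold ipX
    rw [← Finset.sum_add_distrib]
    refine Finset.sum_congr rfl fun i _ => ?_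
    rw [← Finset.sum_add_distrib]
    exact Finset.sum_congr rfl fun j _ => by ring
  have key : (0:ℝ) ≤ A + 2*lam*C + lam^2*B := by
    have h0 := ipX_nonneg M N (fun i j => (x i j - g i j) + lam * Dq i j)
    have h1 : ipX M N (fun i j => (x i j - g i j) + lam * Dq i j)
        (fun i j => (x i j - g i j) + lam * Dq i j) = A + 2*lam*C + lam^2*B :=
      ipX_expand M N (fun i j => x i j - g i j) Dq lam
    linarith [h1 ▸ h0]
  rw [f1, hJu, f2]
  have hh : C + ipX M N g Dq ≤ tvJ M N x := by rw [← f3]; exact hJx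
  have h2l : (0:ℝ) < 2*lam := by linarith
  have hq1 : lam^2*B/(2*lam) + (ipX M N g Dq - lam*B)
      ≤ A/(2*lam) + (C + ipX M N g Dq) := by
    rw [div_add' _ _ _ h2l.ne', div_add' _ _ _ h2l.ne', div_le_div_iff₀ h2l h2l]
    nlinarith [mul_nonneg h2l.le key]
  linarith [hh, hq1]
end
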